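/- arXiv:2209.00634 — 2 statements merged into one kernel-verified Lean document; each statement's English description precedes it below -/
import Mathlib

section
/- The heavier-higher order on finitely supported subprobability distributions over a poset is a partial order: it is reflexive, transitive, and antisymmetric. -/
/-- An upwards-closed subset of a poset. -/
def UpClosed {X : Type*} [PartialOrder X] (U : Set X) : Prop :=
  ∀ ⦃x y : X⦄, x ∈ U → x ≤ y → y ∈ U

/-- A finitely supported subprobability distribution. -/
structure SubDist (X : Type*) where
  f : X → ℝ
  nonneg : ∀ x, 0 ≤ f x
  finsupp : (Function.support f).Finite
  mass_le : (∑ᶠ x, f x) ≤ 1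

/-- The heavier-higher order on (functions underlying) subdistributions. -/
def hhLE {X : Type*} [PartialOrder X] (f g : X → ℝ) : Prop :=
  ∀ U : Set X, UpClosed U → (∑ᶠ x ∈ U, f x) ≤ ∑ᶠ x ∈ U, g x

open Set

theorem IsUpperSet.upClosed {X : Type*} [PartialOrder X] {U : Set X} (hU : IsUpperSet U) :
    UpClosed U :=
  fun _ _ hx hxy => hU hxy hx

theorem finsum_mem_Ici_eq_add_finsum_mem_Ioi {X M : Type*} [PartialOrder X] [AddCommMonoid M]
    {f : X → M} (hf : (Function.support f).Finite) (x : X) :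
    ∑ᶠ y ∈ Ici x, f y = f x + ∑ᶠ y ∈ Ioi x, f y := by
  rw [← Ioi_insert, finsum_mem_insert' f self_notMem_Ioi (hf.subset inter_subset_right)]

namespace hhLE

variable {X : Type*} [PartialOrder X]

theorem refl (f : X → ℝ) : hhLE f f :=
  fun _ _ => le_rfl

theorem trans {f g h : X → ℝ} (hfg : hhLE f g) (hgh : hhLE g h) : hhLE f h :=
  fun U hU => (hfg U hU).trans (hgh U hU)

theorem finsum_mem_eq_of_isUpperSet {f g : X → ℝ} (hfg : hhLE f g) (hgf : hhLE g f) {U : Set X}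
    (hU : IsUpperSet U) : ∑ᶠ y ∈ U, f y = ∑ᶠ y ∈ U, g y :=
  le_antisymm (hfg U hU.upClosed) (hgf U hU.upClosed)

/-- A finitely supported function is recovered from its up-set sums as
`f x = ∑ᶠ y ∈ Ici x, f y - ∑ᶠ y ∈ Ioi x, f y`. -/
theorem antisymm {f g : X → ℝ} (hf : (Function.support f).Finite)
    (hg : (Function.support g).Finite) (hfg : hhLE f g) (hgf : hhLE g f) : f = g := by
  funext x
  have hIci := finsum_mem_eq_of_isUpperSet hfg hgf (isUpperSet_Ici (a := x))
  rw [finsum_mem_Ici_eq_add_finsum_mem_Ioi hf, finsum_mem_Ici_eq_add_finsum_mem_Ioi hg,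
    finsum_mem_eq_of_isUpperSet hfg hgf (isUpperSet_Ioi (a := x))] at hIci
  exact add_right_cancel hIci

end hhLE

theorem hh_partialOrder {X : Type*} [PartialOrder X] :
    (∀ θ : SubDist X, hhLE θ.f θ.f) ∧
    (∀ θ₁ θ₂ θ₃ : SubDist X, hhLE θ₁.f θ₂.f → hhLE θ₂.f θ₃.f → hhLE θ₁.f θ₃.f) ∧
    (∀ θ₁ θ₂ : SubDist X, hhLE θ₁.f θ₂.f → hhLE θ₂.f θ₁.f → θ₁.f = θ₂.f) :=
  ⟨fun θ => hhLE.refl θ.f, fun _ _ _ => hhLE.trans,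
    fun θ₁ θ₂ => hhLE.antisymm θ₁.finsupp θ₂.finsupp⟩
end

section
/- In the convex algebra of subdistributions: for a subdistribution θ on X ∪ {x} written as θ = r·δ_x + θ' where θ'(x) = 0 and r < 1, the subdistribution θ'/(1−r) is the least fixed point (with respect to the heavier-higher order) of the map φ ↦ r·φ + θ' on subdistributions over X ∪ {x}; i.e., it satisfies r·(θ'/(1−r)) + θ' = θ'/(1−r), and it is below every φ satisfying r·φ + θ' ≤^{hh} φ. -/
open Classical in
noncomputable def dirac {X : Type*} (x : X) : X → ℝ :=
  fun y => if y = x then 1 else 0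

/-! On an up-closed set `U`, the hypothesis `r • φ + θ' ≤ φ` reads `r φ(U) + θ'(U) ≤ φ(U)`, that is
`θ'(U) ≤ (1 - r) φ(U)`, and since finite sums commute with scaling this is exactly
`(θ' / (1 - r))(U) ≤ φ(U)`. -/

theorem mul_div_one_sub_add_self {K : Type*} [Field K] {r : K} (hr : r ≠ 1) (a : K) :
    r * (a / (1 - r)) + a = a / (1 - r) := by
  have : 1 - r ≠ 0 := sub_ne_zero.mpr hr.symm
  field_simp
  ring

theorem hhLE_div_one_sub_of_hhLE_mul_add {X : Type*} [PartialOrder X] {f g : X → ℝ} {r : ℝ}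
    (hr : r < 1) (hf : f.support.Finite) (hg : g.support.Finite)
    (h : hhLE (fun y => r * g y + f y) g) : hhLE (fun y => f y / (1 - r)) g := by
  intro U hU
  have hU_le := h U hU
  beta_reduce at hU_le ⊢
  rw [finsum_mem_add_distrib'
      ((hg.subset (Function.support_mul_subset_right (fun _ => r) g)).inter_of_right U)
      (hf.inter_of_right U), ← mul_finsum_mem] at hU_le
  simp only [div_eq_mul_inv]
  rw [← finsum_mem_mul, ← div_eq_mul_inv, div_le_iff₀ (sub_pos.mpr hr)]
  linarith

theorem conditioning_is_least_fixed_point_general {X : Type*} [PartialOrder X]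
    (r : ℝ) (hr1 : r < 1)
    (θ' : SubDist X) :
    (∀ y, r * (θ'.f y / (1 - r)) + θ'.f y = θ'.f y / (1 - r)) ∧
    (∀ φ : SubDist X, hhLE (fun y => r * φ.f y + θ'.f y) φ.f →
      hhLE (fun y => θ'.f y / (1 - r)) φ.f) :=
  ⟨fun y => mul_div_one_sub_add_self hr1.ne (θ'.f y),
    fun φ hφ => hhLE_div_one_sub_of_hhLE_mul_add hr1 θ'.finsupp φ.finsupp hφ⟩

theorem conditioning_is_least_fixed_point {X : Type*} [PartialOrder X]
    (x : X) (r : ℝ) (hr0 : 0 ≤ r) (hr1 : r < 1)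
    (θ θ' : SubDist X) (hx : θ'.f x = 0)
    (hθ : θ.f = fun y => r * dirac x y + θ'.f y) :
    (∀ y, r * (θ'.f y / (1 - r)) + θ'.f y = θ'.f y / (1 - r)) ∧
    (∀ φ : SubDist X, hhLE (fun y => r * φ.f y + θ'.f y) φ.f →
      hhLE (fun y => θ'.f y / (1 - r)) φ.f) :=
  conditioning_is_least_fixed_point_general r hr1 θ'
end
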